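/- arXiv:2511.22810 — 3 statements merged into one kernel-verified Lean document; each statement's English description precedes it below -/
import Mathlib

section
/- Let b₁,…,b_m ∈ ℝⁿ positively span ℝⁿ, let 1 ≤ n_a ≤ m, let d₁ := inf over unit vectors e of max_{1≤i≤m} ⟨bᵢ, e⟩, and let u_u ≥ 0. Then for every s ∈ ℝⁿ there exist δ ∈ {0,1}^m with Σᵢ δᵢ = n_a and u ∈ ℝ^m with 0 ≤ uᵢ ≤ u_u for all i, such that ⟨s, Σᵢ bᵢ δᵢ uᵢ⟩ ≥ d₁ u_u ‖s‖. -/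
open RealInnerProductSpace

/-- A finite family of vectors positively spans ℝⁿ: every vector is a nonnegative
linear combination of the family. -/
def PositivelySpans {n m : ℕ} (b : Fin m → EuclideanSpace ℝ (Fin n)) : Prop :=
  ∀ x : EuclideanSpace ℝ (Fin n), ∃ lam : Fin m → ℝ,
    (∀ i, 0 ≤ lam i) ∧ ∑ i, lam i • b i = x

/-- with d₁ := inf over unit vectors e of max_i ⟨bᵢ, e⟩ and
u_u ≥ 0, for every s ∈ ℝⁿ there exist binary δ with Σᵢ δᵢ = n_a and
u ∈ ℝ^m with 0 ≤ uᵢ ≤ u_u such that ⟨s, Σᵢ bᵢ δᵢ uᵢ⟩ ≥ d₁ u_u ‖s‖. -/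
theorem stmt4 {n m : ℕ} (hn : 0 < n) (n_a : ℕ) (hna : 1 ≤ n_a) (hnam : n_a ≤ m)
    (b : Fin m → EuclideanSpace ℝ (Fin n)) (hspan : PositivelySpans b)
    (d₁ : ℝ)
    (hd₁ : d₁ = sInf {x : ℝ | ∃ e : EuclideanSpace ℝ (Fin n), ‖e‖ = 1 ∧
      x = ⨆ i, ⟪b i, e⟫})
    (u_u : ℝ) (hu_u : 0 ≤ u_u) (s : EuclideanSpace ℝ (Fin n)) :
    ∃ (δ : Fin m → ℝ) (u : Fin m → ℝ),
      (∀ i, δ i = 0 ∨ δ i = 1) ∧ (∑ i, δ i) = (n_a : ℝ) ∧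
      (∀ i, 0 ≤ u i ∧ u i ≤ u_u) ∧
      d₁ * u_u * ‖s‖ ≤ ⟪s, ∑ i, (δ i * u i) • b i⟫ := by
  have hm : 0 < m := lt_of_lt_of_le hna hnam
  haveI : Nonempty (Fin m) := ⟨⟨0, hm⟩⟩
  have hcard : n_a ≤ (Finset.univ : Finset (Fin m)).card := by simpa using hnam
  by_cases hs : s = 0
  · obtain ⟨T, hTsub, hTcard⟩ := Finset.exists_subset_card_eq hcard
    refine ⟨fun i => if i ∈ T then 1 else 0, fun _ => 0,
      fun i => by by_cases h : i ∈ T <;> simp [h], ?_,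
      fun i => ⟨le_refl 0, hu_u⟩, ?_⟩
    · rw [Finset.sum_ite_mem, Finset.univ_inter]
      simp [hTcard]
    · simp [hs]
  · have hsn : (0:ℝ) < ‖s‖ := norm_pos_iff.mpr hs
    set e : EuclideanSpace ℝ (Fin n) := ‖s‖⁻¹ • s with he_def
    have he : ‖e‖ = 1 := by
      rw [he_def, norm_smul, norm_inv, norm_norm, inv_mul_cancel₀ hsn.ne']
    -- lower bound for the set
    set S := {x : ℝ | ∃ e : EuclideanSpace ℝ (Fin n), ‖e‖ = 1 ∧
      x = ⨆ i, ⟪b i, e⟫} with hS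
    have hbdd : BddBelow S := by
      refine ⟨0, fun x hx => ?_⟩
      obtain ⟨e', he', hx⟩ := hx
      by_contra h
      push_neg at h
      obtain ⟨lam, hlam, hsum⟩ := hspan e'
      have h1 : ⟪e', e'⟫ = 1 := by
        rw [real_inner_self_eq_norm_sq, he']; norm_num
      have h2 : ⟪(∑ i, lam i • b i : EuclideanSpace ℝ (Fin n)), e'⟫
          = ∑ i, lam i * ⟪b i, e'⟫ := by
        rw [sum_inner]
        exact Finset.sum_congr rfl fun i _ => real_inner_smul_left _ _ _
      have hle : ∀ i, ⟪b i, e'⟫ ≤ x := by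
        intro i
        rw [hx]
        exact le_ciSup (f := fun i => (⟪b i, e'⟫ : ℝ)) (Set.Finite.bddAbove (Set.finite_range _)) i
      have h3 : ∑ i, lam i * ⟪b i, e'⟫ ≤ 0 := by
        apply Finset.sum_nonpos
        intro i _
        exact mul_nonpos_of_nonneg_of_nonpos (hlam i) (le_of_lt (lt_of_le_of_lt (hle i) h))
      rw [hsum, h1] at h2
      linarith
    have hex : ∃ i₀, (⟪b i₀, e⟫ : ℝ) = ⨆ i, (⟪b i, e⟫ : ℝ) := exists_eq_ciSup_of_finite
    obtain ⟨i₀, hi₀⟩ := hex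
    have hmem : (⨆ i, ⟪b i, e⟫) ∈ S := ⟨e, he, rfl⟩
    have hd : d₁ ≤ ⟪b i₀, e⟫ := by
      rw [hd₁, hi₀]
      exact csInf_le hbdd hmem
    have hcard0 : ({i₀} : Finset (Fin m)).card ≤ n_a := by simp [hna]
    obtain ⟨T, hT0, hTcard⟩ :=
      Finset.exists_superset_card_eq hcard0 hcard
    refine ⟨fun i => if i ∈ T then 1 else 0, fun i => if i = i₀ then u_u else 0,
      fun i => by by_cases h : i ∈ T <;> simp [h], ?_,
      fun i => by by_cases h : i = i₀ <;> simp [h, hu_u], ?_⟩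
    · rw [Finset.sum_ite_mem, Finset.univ_inter]
      simp [hTcard]
    · have hi₀T : i₀ ∈ T := hT0 (Finset.mem_singleton_self i₀)
      have hsum : (∑ i, ((if i ∈ T then (1:ℝ) else 0) * (if i = i₀ then u_u else 0)) • b i)
          = u_u • b i₀ := by
        rw [Finset.sum_eq_single i₀]
        · simp [hi₀T]
        · intro i _ hi; simp [hi]
        · simp
      rw [hsum]
      have key : ⟪s, u_u • b i₀⟫ = u_u * ‖s‖ * ⟪b i₀, e⟫ := by
        rw [real_inner_smul_right, he_def, real_inner_smul_right, real_inner_comm]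
        field_simp
      rw [key]
      have : d₁ * (u_u * ‖s‖) ≤ ⟪b i₀, e⟫ * (u_u * ‖s‖) :=
        mul_le_mul_of_nonneg_right hd (by positivity)
      linarith
end

section
/- Let s ∈ ℝ^{n_a}, r ∈ ℝ, and assume it is NOT the case that both r > 0 and max_{1≤i≤n_a} sᵢ ≤ 0. Define ū ∈ ℝ^{n_a} by ūᵢ = m(sᵢ)·r / Σ_{j=1}^{n_a} m(s_j)² if r > 0, and ūᵢ = 0 if r ≤ 0, where m(a) = max{0,a}. Then ū is feasible (ū ≥ 0 componentwise and ⟨s, ū⟩ ≥ r) and ū minimizes (1/2)‖u‖² over the set {u ∈ ℝ^{n_a} : u ≥ 0 componentwise, ⟨s, u⟩ ≥ r}; that is, for every u in this set, ‖ū‖ ≤ ‖u‖. -/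
/-!
When `r > 0`, `ū = (r / ‖s⁺‖²) • s⁺`, where `s⁺` is the componentwise positive part of `s`.
Since `⟪s, s⁺⟫ = ‖s⁺‖²`, the constraint is active at `ū`. For a feasible `u ≥ 0` we have
`r ≤ ⟪s, u⟫ ≤ ⟪s⁺, u⟫ ≤ ‖s⁺‖ ‖u‖` by Cauchy–Schwarz, i.e. `‖u‖ ≥ r / ‖s⁺‖ = ‖ū‖`.
-/

open RealInnerProductSpace

theorem norm_div_norm_sq_smul_le_of_le_inner {E : Type*} [NormedAddCommGroup E]
    [InnerProductSpace ℝ E] {v u : E} {c : ℝ} (hc : 0 ≤ c) (hcu : c ≤ ⟪v, u⟫) :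
    ‖(c / ‖v‖ ^ 2) • v‖ ≤ ‖u‖ := by
  rcases eq_or_ne v 0 with rfl | hv
  · simp
  have hv' : 0 < ‖v‖ := norm_pos_iff.mpr hv
  rw [norm_smul, Real.norm_of_nonneg (by positivity), div_mul_eq_mul_div, pow_two,
    mul_div_mul_right _ _ hv'.ne', div_le_iff₀ hv', mul_comm]
  exact hcu.trans (real_inner_le_norm v u)

namespace EuclideanSpace

variable {ι : Type*}

noncomputable def posPart (s : EuclideanSpace ℝ ι) : EuclideanSpace ℝ ι :=
  WithLp.toLp 2 fun i => max 0 (s i)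

@[simp]
theorem posPart_apply (s : EuclideanSpace ℝ ι) (i : ι) : posPart s i = max 0 (s i) := rfl

theorem norm_posPart_sq [Fintype ι] (s : EuclideanSpace ℝ ι) :
    ‖posPart s‖ ^ 2 = ∑ i, max 0 (s i) ^ 2 := by
  simp [EuclideanSpace.norm_sq_eq]

theorem inner_posPart_right_self [Fintype ι] (s : EuclideanSpace ℝ ι) : ⟪s, posPart s⟫ = ‖posPart s‖ ^ 2 := by
  rw [← real_inner_self_eq_norm_sq]
  refine Finset.sum_congr rfl fun i _ => ?_
  simp only [posPart_apply, RCLike.inner_apply, conj_trivial]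
  rcases le_total (s i) 0 with h | h <;> simp [h]

theorem inner_le_inner_posPart_of_nonneg [Fintype ι] (s : EuclideanSpace ℝ ι) {u : EuclideanSpace ℝ ι}
    (hu : ∀ i, 0 ≤ u i) : ⟪s, u⟫ ≤ ⟪posPart s, u⟫ := by
  simp only [PiLp.inner_apply, RCLike.inner_apply, conj_trivial, posPart_apply]
  exact Finset.sum_le_sum fun i _ => mul_le_mul_of_nonneg_left (le_max_right 0 (s i)) (hu i)

theorem posPart_ne_zero {s : EuclideanSpace ℝ ι} {i : ι} (hi : 0 < s i) : posPart s ≠ 0 := by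
  intro h
  have := congrArg (· i) h
  simp only [posPart_apply, max_eq_right hi.le] at this
  exact hi.ne' this

end EuclideanSpace

open EuclideanSpace in
/-- closed-form solution of the QP-based controller
(Theorem 2 of the paper): under the non-triggering assumption, the explicit
vector ū is feasible and minimizes (1/2)‖u‖² over the feasible set. -/
theorem stmt6 {n_a : ℕ} (s : EuclideanSpace ℝ (Fin n_a)) (r : ℝ)
    (hnt : ¬ (0 < r ∧ ∀ i, s i ≤ 0))
    (ubar : EuclideanSpace ℝ (Fin n_a))
    (hubar : ∀ i, ubar i =
      if 0 < r then max 0 (s i) * r / ∑ j, (max 0 (s j)) ^ 2 else 0) :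
    (∀ i, 0 ≤ ubar i) ∧ r ≤ ⟪s, ubar⟫ ∧
      ∀ u : EuclideanSpace ℝ (Fin n_a),
        (∀ i, 0 ≤ u i) → r ≤ ⟪s, u⟫ → ‖ubar‖ ≤ ‖u‖ := by
  by_cases hr : 0 < r
  · obtain ⟨i, hi⟩ : ∃ i, 0 < s i := by simpa using fun h => hnt ⟨hr, h⟩
    have hp : ‖posPart s‖ ^ 2 ≠ 0 := by positivity [posPart_ne_zero hi]
    have hubar_eq : ubar = (r / ‖posPart s‖ ^ 2) • posPart s := by
      ext j
      rw [hubar j, if_pos hr, norm_posPart_sq]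
      simp only [PiLp.smul_apply, smul_eq_mul, posPart_apply]
      ring
    refine ⟨fun j => ?_, ?_, fun u hu hsu => ?_⟩
    · rw [hubar j, if_pos hr]; positivity
    · rw [hubar_eq, inner_smul_right, inner_posPart_right_self, div_mul_cancel₀ r hp]
    · rw [hubar_eq]
      exact norm_div_norm_sq_smul_le_of_le_inner hr.le
        (hsu.trans (inner_le_inner_posPart_of_nonneg s hu))
  · have hzero : ubar = 0 := by ext j; simp [hubar j, hr]
    subst hzero
    exact ⟨fun _ => le_rfl, by simpa using hr, fun u _ _ => by simp⟩
end

section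
/- Let b₁,…,b_m ∈ ℝⁿ positively span ℝⁿ, let 1 ≤ n_a ≤ m, let u_u > 0, let s_b ∈ ℝⁿ and r ∈ ℝ. Consider the feasible set F of triples (u, δ, ρ) with u ∈ ℝ^m, δ ∈ {0,1}^m, ρ ∈ ℝ satisfying 0 ≤ uᵢ ≤ u_u for all i, ρ ≥ 0, Σᵢ δᵢ = n_a, and r + ρ ≤ ⟨s_b, Σᵢ bᵢ δᵢ uᵢ⟩. Let J = { j : ⟨b_j, s_b⟩ = max_{1≤i≤m} ⟨bᵢ, s_b⟩ }. If (u*, δ*, ρ*) ∈ F satisfies ρ ≤ ρ* for every (u, δ, ρ) ∈ F, then there exists an index j ∈ J with δ*_j = 1. -/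
open RealInnerProductSpace

/-- Claim 1 of the paper: any optimal solution of the MIP
activates at least one channel j whose vector b_j maximizes ⟨bᵢ, s_b⟩. -/
theorem stmt8 {n m : ℕ} (n_a : ℕ) (hna : 1 ≤ n_a) (hnam : n_a ≤ m)
    (b : Fin m → EuclideanSpace ℝ (Fin n)) (hspan : PositivelySpans b)
    (u_u : ℝ) (huu : 0 < u_u) (s_b : EuclideanSpace ℝ (Fin n)) (r : ℝ)
    -- feasible set membership predicate
    (Feas : (Fin m → ℝ) → (Fin m → ℝ) → ℝ → Prop)
    (hFeas : ∀ u δ ρ, Feas u δ ρ ↔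
      ((∀ i, 0 ≤ u i ∧ u i ≤ u_u) ∧ (∀ i, δ i = 0 ∨ δ i = 1) ∧ 0 ≤ ρ ∧
        (∑ i, δ i) = (n_a : ℝ) ∧ r + ρ ≤ ⟪s_b, ∑ i, (δ i * u i) • b i⟫))
    (ustar δstar : Fin m → ℝ) (ρstar : ℝ)
    (hfeas : Feas ustar δstar ρstar)
    (hopt : ∀ u δ ρ, Feas u δ ρ → ρ ≤ ρstar) :
    ∃ j : Fin m, (∀ i : Fin m, ⟪b i, s_b⟫ ≤ ⟪b j, s_b⟫) ∧ δstar j = 1 := by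
  obtain ⟨hu, hδ, hρ0, hsum, hineq⟩ := (hFeas ustar δstar ρstar).mp hfeas
  set c : Fin m → ℝ := fun i => ⟪s_b, b i⟫ with hc
  have hm : 0 < m := lt_of_lt_of_le hna hnam
  haveI : Nonempty (Fin m) := ⟨⟨0, hm⟩⟩
  obtain ⟨j0, -, hj0⟩ := Finset.exists_max_image (Finset.univ : Finset (Fin m)) c
    Finset.univ_nonempty
  have hj0' : ∀ i, c i ≤ c j0 := fun i => hj0 i (Finset.mem_univ i)
  -- there is an active index
  have hkex : ∃ k, δstar k = 1 := by
    by_contra h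
    push_neg at h
    have hz : ∀ i, δstar i = 0 := fun i => (hδ i).resolve_right (h i)
    have h0 : (∑ i, δstar i) = 0 := by simp [hz]
    rw [hsum] at h0
    have : (0:ℝ) < (n_a : ℝ) := by exact_mod_cast hna
    linarith
  obtain ⟨k, hk1⟩ := hkex
  -- inner product as a sum
  have hV : ∀ (δ u : Fin m → ℝ), ⟪s_b, ∑ i, (δ i * u i) • b i⟫ = ∑ i, (δ i * u i) * c i := by
    intro δ u
    rw [inner_sum]
    exact Finset.sum_congr rfl fun i _ => real_inner_smul_right _ _ _
  by_cases hM : 0 < c j0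
  · -- main case: argue by contradiction
    by_contra hcon
    push_neg at hcon
    have hcomm : ∀ i : Fin m, (⟪b i, s_b⟫:ℝ) = c i := fun i => real_inner_comm _ _
    have hcomm' : ∀ i j : Fin m, (⟪b i, s_b⟫ ≤ ⟪b j, s_b⟫) ↔ c i ≤ c j := by
      intro i j
      rw [hcomm, hcomm]
    have hδj0 : δstar j0 = 0 := by
      refine (hδ j0).resolve_right (hcon j0 ?_)
      intro i
      exact (hcomm' i j0).mpr (hj0' i)
    have hck : c k < c j0 := by
      have := hcon k
      by_contra hle
      push_neg at hle
      exact this (fun i => (hcomm' i k).mpr (le_trans (hj0' i) hle)) hk1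
    have hjk : j0 ≠ k := by
      intro h; rw [h, hk1] at hδj0; norm_num at hδj0
    -- new candidate point
    set u' : Fin m → ℝ := Function.update ustar j0 u_u with hu'
    set δ' : Fin m → ℝ := Function.update (Function.update δstar k 0) j0 1 with hδ'
    have hδ'j0 : δ' j0 = 1 := by simp [hδ']
    have hδ'k : δ' k = 0 := by simp [hδ', Function.update_of_ne (Ne.symm hjk)]
    have hu'j0 : u' j0 = u_u := by simp [hu']
    have hoff : ∀ i, i ≠ j0 → i ≠ k → δ' i = δstar i ∧ u' i = ustar i := by
      intro i h1 h2
      simp [hδ', hu', Function.update_of_ne h1, Function.update_of_ne h2]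
    -- a difference-of-sums helper
    have key : ∀ (f g : Fin m → ℝ), (∀ i, i ≠ j0 → i ≠ k → f i = g i) →
        ∑ i, f i - ∑ i, g i = (f j0 - g j0) + (f k - g k) := by
      intro f g hfg
      rw [← Finset.sum_sub_distrib]
      have : ∀ i : Fin m, f i - g i =
          (if i = j0 then f j0 - g j0 else 0) + (if i = k then f k - g k else 0) := by
        intro i
        by_cases h1 : i = j0
        · subst h1; rw [if_pos rfl, if_neg hjk]; ring
        · by_cases h2 : i = k
          · subst h2; rw [if_neg h1, if_pos rfl]; ring
          · rw [if_neg h1, if_neg h2, hfg i h1 h2]; ring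
      rw [Finset.sum_congr rfl fun i _ => this i, Finset.sum_add_distrib]
      simp
    -- gain is positive
    have hgain : 0 < u_u * c j0 - ustar k * c k := by
      obtain ⟨h0k, hku⟩ := hu k
      rcases le_or_gt (c k) 0 with h | h
      · nlinarith
      · nlinarith
    set ρ' : ℝ := ρstar + (u_u * c j0 - ustar k * c k) with hρ'
    have hfeas' : Feas u' δ' ρ' := by
      rw [hFeas]
      refine ⟨?_, ?_, ?_, ?_, ?_⟩
      · intro i
        by_cases h1 : i = j0
        · subst h1; rw [hu'j0]; exact ⟨le_of_lt huu, le_refl _⟩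
        · rw [hu', Function.update_of_ne h1]; exact hu i
      · intro i
        by_cases h1 : i = j0
        · subst h1; rw [hδ'j0]; right; rfl
        · by_cases h2 : i = k
          · subst h2; rw [hδ'k]; left; rfl
          · rw [(hoff i h1 h2).1]; exact hδ i
      · linarith
      · have := key δ' δstar (fun i h1 h2 => (hoff i h1 h2).1)
        rw [hδ'j0, hδ'k, hδj0, hk1] at this
        linarith [hsum, this]
      · rw [hV]
        have hdiff := key (fun i => (δ' i * u' i) * c i) (fun i => (δstar i * ustar i) * c i)
          (fun i h1 h2 => by simp only [(hoff i h1 h2).1, (hoff i h1 h2).2])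
        simp only [hδ'j0, hδ'k, hδj0, hk1, hu'j0, one_mul, zero_mul, mul_zero] at hdiff
        rw [hV] at hineq
        linarith
    have := hopt u' δ' ρ' hfeas'
    rw [hρ'] at this
    linarith
  · -- degenerate case: max ≤ 0 forces s_b = 0
    push_neg at hM
    obtain ⟨lam, hlam, hlamsum⟩ := hspan s_b
    have hss : ⟪s_b, s_b⟫ = ∑ i, lam i * c i := by
      have h2 : (⟪s_b, ∑ i, lam i • b i⟫:ℝ) = ∑ i, lam i * c i := by
        rw [inner_sum]
        exact Finset.sum_congr rfl fun i _ => real_inner_smul_right _ _ _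
      rw [hlamsum] at h2
      exact h2
    have hle : ⟪s_b, s_b⟫ ≤ 0 := by
      rw [hss]
      apply Finset.sum_nonpos
      intro i _
      exact mul_nonpos_of_nonneg_of_nonpos (hlam i) (le_trans (hj0' i) hM)
    have hs0 : s_b = 0 := by
      have := real_inner_self_nonneg (x := s_b)
      have h0 : ⟪s_b, s_b⟫ = 0 := le_antisymm hle this
      exact inner_self_eq_zero.mp h0
    exact ⟨k, fun i => by rw [hs0]; simp, hk1⟩
end
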